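/- For a Boolean algebra A, the Stone space S(A) has countable spread if and only if every minimally generated ideal of A is countably generated, where an ideal is minimally generated if it has a generating set D no member of which belongs to the ideal generated by the remaining members (and the claim is that every such minimal generating set D is countable). -/
import Mathlib

open Set

/-- The Stone space of a Boolean algebra `A`. -/
def StoneSpace (A : Type*) [BooleanAlgebra A] : Type _ :=
  {I : Order.Ideal A // I.IsMaximal}

instance (A : Type*) [BooleanAlgebra A] : TopologicalSpace (StoneSpace A) :=
  TopologicalSpace.generateFrom {S | ∃ a : A, S = {I : StoneSpace A | a ∉ I.1}}

/-- `D` generates the ideal `I`: `D ⊆ I` and every element of `I` lies below a finite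
join of elements of `D`. -/
def Generates {A : Type*} [BooleanAlgebra A] (D : Set A) (I : Order.Ideal A) : Prop :=
  D ⊆ (I : Set A) ∧ ∀ a ∈ I, ∃ F : Finset A, ↑F ⊆ D ∧ a ≤ F.sup id

/-- `D` is a minimal generating set: no `d ∈ D` is in the ideal generated by `D \ {d}`. -/
def MinimalGenerating {A : Type*} [BooleanAlgebra A] (D : Set A) : Prop :=
  ∀ d ∈ D, ¬ ∃ F : Finset A, ↑F ⊆ D \ {d} ∧ d ≤ F.sup id

namespace Stmt9Aux

variable {A : Type*} [BooleanAlgebra A]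

/-- The ideal generated by a set `D`. -/
def genIdeal (D : Set A) : Order.Ideal A where
  carrier := {a | ∃ F : Finset A, ↑F ⊆ D ∧ a ≤ F.sup id}
  lower' := fun _ _ hba ⟨F, hF, h⟩ => ⟨F, hF, le_trans hba h⟩
  nonempty' := ⟨⊥, ∅, by simp, by simp⟩
  directed' := by
    classical
    rintro a ⟨F, hF, ha⟩ b ⟨G, hG, hb⟩
    refine ⟨(F ∪ G).sup id, ⟨F ∪ G, by
      simp only [Finset.coe_union]; exact union_subset hF hG, le_rfl⟩,
      ha.trans (Finset.sup_mono Finset.subset_union_left),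
      hb.trans (Finset.sup_mono Finset.subset_union_right)⟩

lemma mem_genIdeal {D : Set A} {a : A} :
    a ∈ genIdeal D ↔ ∃ F : Finset A, ↑F ⊆ D ∧ a ≤ F.sup id := Iff.rfl

lemma finset_sup_mem (I : Order.Ideal A) (F : Finset A) (h : ∀ x ∈ F, x ∈ I) :
    F.sup id ∈ I := by
  classical
  induction F using Finset.induction_on with
  | empty => simp only [Finset.sup_empty]; exact I.bot_mem
  | @insert a s _ ih =>
    rw [Finset.sup_insert]
    exact Order.Ideal.sup_mem (h a (Finset.mem_insert_self a s))
      (ih fun x hxs => h x (Finset.mem_insert_of_mem hxs))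

lemma exists_basic' {U : Set (StoneSpace A)}
    (h : TopologicalSpace.GenerateOpen
      {S | ∃ a : A, S = {I : StoneSpace A | a ∉ I.1}} U) :
    ∀ x ∈ U, ∃ a : A, a ∉ x.1 ∧ {I : StoneSpace A | a ∉ I.1} ⊆ U := by
  induction h with
  | basic S hS =>
    intro x hx
    obtain ⟨a, rfl⟩ := hS
    exact ⟨a, hx, subset_rfl⟩
  | univ =>
    intro x _
    refine ⟨⊤, fun h => ?_, fun _ _ => trivial⟩
    haveI := x.2
    exact x.2.toIsProper.ne_univ (eq_univ_of_forall fun a => x.1.lower le_top h)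
  | inter U V _ _ ihU ihV =>
    intro x hx
    obtain ⟨a, ha, hsa⟩ := ihU x hx.1
    obtain ⟨b, hb, hsb⟩ := ihV x hx.2
    haveI := x.2
    haveI hp : x.1.IsPrime := inferInstance
    refine ⟨a ⊓ b, fun h => (hp.mem_or_mem h).elim ha hb, fun I hI =>
      ⟨hsa fun h' => hI (I.1.lower inf_le_left h'),
       hsb fun h' => hI (I.1.lower inf_le_right h')⟩⟩
  | sUnion S _ ih =>
    intro x hx
    obtain ⟨s, hs, hxs⟩ := hx
    obtain ⟨a, ha, hsub⟩ := ih s hs x hxs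
    exact ⟨a, ha, hsub.trans (subset_sUnion_of_mem hs)⟩

lemma exists_basic {U : Set (StoneSpace A)} (hU : IsOpen U) :
    ∀ x ∈ U, ∃ a : A, a ∉ x.1 ∧ {I : StoneSpace A | a ∉ I.1} ⊆ U :=
  exists_basic' hU

end Stmt9Aux

open Stmt9Aux in
/-- the Stone space of `A` has countable spread iff every minimal generating
set of every ideal of `A` is countable. -/
theorem stmt9 {A : Type*} [BooleanAlgebra A] :
    (∀ T : Set (StoneSpace A),
        (∀ x ∈ T, ∃ U : Set (StoneSpace A), IsOpen U ∧ x ∈ U ∧ ∀ y ∈ T, y ∈ U → y = x) →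
        T.Countable) ↔
      ∀ (I : Order.Ideal A) (D : Set A), Generates D I → MinimalGenerating D →
        D.Countable := by
  classical
  constructor
  · -- countable spread → minimal generating sets countable
    intro hspread I D _ hmin
    have key : ∀ d ∈ D, ∃ J : Order.Ideal A, J.IsMaximal ∧ d ∉ J ∧
        ∀ e ∈ D, e ≠ d → e ∈ J := by
      intro d hd
      have hdis : Disjoint ((Order.PFilter.principal d : Order.PFilter A) : Set A)
          ((genIdeal (D \ {d}) : Order.Ideal A) : Set A) := by
        rw [Set.disjoint_left]
        rintro x hx ⟨F, hF, hle⟩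
        exact hmin d hd ⟨F, hF, le_trans (Order.PFilter.mem_principal.mp hx) hle⟩
      obtain ⟨J, hJp, hJle, hJdis⟩ :=
        DistribLattice.prime_ideal_of_disjoint_filter_ideal hdis
      haveI := hJp
      refine ⟨J, inferInstance, ?_, ?_⟩
      · exact fun hdJ => Set.disjoint_left.mp hJdis
          (Order.PFilter.mem_principal.mpr le_rfl) hdJ
      · intro e he hed
        exact hJle ⟨{e}, by simp [Set.singleton_subset_iff, he, hed], by simp⟩
    choose f hmax hdf hDf using key
    set g : D → StoneSpace A := fun d => ⟨f d d.2, hmax d d.2⟩ with hg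
    have hginj : Function.Injective g := by
      intro d e hde
      by_contra hne
      have hvne : (d : A) ≠ (e : A) := fun h => hne (Subtype.ext h)
      have : (d : A) ∈ f e e.2 := hDf e e.2 d d.2 hvne
      have heq : f d d.2 = f e e.2 := congrArg Subtype.val hde
      exact hdf d d.2 (heq ▸ this)
    have hT : (Set.range g).Countable := by
      apply hspread
      rintro x ⟨d, rfl⟩
      refine ⟨{I : StoneSpace A | (d : A) ∉ I.1}, ?_, hdf d d.2, ?_⟩
      · exact TopologicalSpace.GenerateOpen.basic _ ⟨d, rfl⟩
      · rintro y ⟨e, rfl⟩ hy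
        by_contra hne
        have hvne : (d : A) ≠ (e : A) := by
          intro h
          exact hne (congrArg g (Subtype.ext h.symm))
        exact hy (hDf e e.2 d d.2 hvne)
    haveI := hT.to_subtype
    have : Function.Injective fun d : D => (⟨g d, Set.mem_range_self d⟩ : Set.range g) :=
      fun d e h => hginj (congrArg Subtype.val h)
    haveI : _root_.Countable ↥D := this.countable
    exact Set.countable_coe_iff.mp inferInstance
  · -- minimal generating sets countable → countable spread
    intro hgen T hdisc
    have key : ∀ x ∈ T, ∃ a : A, a ∉ x.1 ∧ ∀ y ∈ T, a ∉ y.1 → y = x := by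
      intro x hx
      obtain ⟨U, hUo, hxU, hsep⟩ := hdisc x hx
      obtain ⟨a, hax, hsub⟩ := exists_basic hUo x hxU
      exact ⟨a, hax, fun y hy hay => hsep y hy (hsub hay)⟩
    choose f hf1 hf2 using key
    set g : T → A := fun x => f x x.2 with hgdef
    set D : Set A := Set.range g with hD
    have hDc : D.Countable := by
      apply hgen (genIdeal D) D
      · refine ⟨fun a ha => ⟨{a}, by simpa using ha, by simp⟩, fun a ha => ha⟩
      · rintro d hd ⟨F, hF, hle⟩
        obtain ⟨x, rfl⟩ := hd
        have hsup : F.sup id ∈ (x : StoneSpace A).1 := by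
          apply finset_sup_mem
          intro e heF
          obtain ⟨⟨y, hyeq⟩, hne⟩ := hF heF
          by_contra heI
          rw [← hyeq] at heI
          have hxy : (x : StoneSpace A) = (y : StoneSpace A) :=
            hf2 y y.2 x x.2 heI
          exact hne (by rw [← hyeq]; exact congrArg g (Subtype.ext hxy.symm) ▸ rfl)
        exact hf1 x x.2 ((x : StoneSpace A).1.lower hle hsup)
    haveI := hDc.to_subtype
    have hginj : Function.Injective g := by
      intro x y hxy
      have : g x ∉ (y : StoneSpace A).1 := hxy ▸ hf1 y y.2
      exact Subtype.ext (hf2 x x.2 y y.2 this).symm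
    have : Function.Injective fun x : T => (⟨g x, Set.mem_range_self x⟩ : D) :=
      fun x y h => hginj (congrArg Subtype.val h)
    haveI : _root_.Countable ↥T := this.countable
    exact Set.countable_coe_iff.mp inferInstance
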